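/- arXiv:2504.15399 — 2 statements merged into one kernel-verified Lean document; each statement's English description precedes it below -/
import Mathlib

section
/- Let n be a positive integer, let w be a vector in ℝ^n, let A be an n×n positive definite symmetric real matrix, and let α, β be integers. Then (wᵀ A^α w)² ≤ (wᵀ A^{α+β} w)·(wᵀ A^{α−β} w), where integer powers of A are defined via its invertibility (A^{-1} is the matrix inverse). -/
open Matrix

/-! The semi-inner product `⟪x, y⟫ = x ⬝ᵥ B *ᵥ y` of `B = A ^ (α - β)` satisfies Cauchy–Schwarz.
Taking `x = w` and `y = A ^ β *ᵥ w`, the symmetry of `A ^ β` gives `⟪x, y⟫ = wᵀ A^α w` and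
`⟪y, y⟫ = wᵀ A^(α+β) w`, while `⟪x, x⟫ = wᵀ A^(α-β) w`. -/

namespace Matrix

variable {ι : Type*} [Fintype ι]

theorem PosSemidef.dotProduct_mulVec_sq_le {M : Matrix ι ι ℝ} (hM : M.PosSemidef) (x y : ι → ℝ) :
    (x ⬝ᵥ M *ᵥ y) ^ 2 ≤ (x ⬝ᵥ M *ᵥ x) * (y ⬝ᵥ M *ᵥ y) := by
  let _ := M.toSeminormedAddCommGroup hM
  let _ := M.toInnerProductSpace hM
  have hinner : ∀ u v : ι → ℝ, inner ℝ u v = u ⬝ᵥ M *ᵥ v := fun u v => dotProduct_comm _ _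
  simpa only [hinner, sq] using real_inner_mul_inner_self_le x y

variable [DecidableEq ι] {A : Matrix ι ι ℝ}

theorem IsSymm.zpow_mulVec_dotProduct (hA : A.IsSymm) (k : ℤ) (x y : ι → ℝ) :
    (A ^ k *ᵥ x) ⬝ᵥ y = x ⬝ᵥ A ^ k *ᵥ y := by
  rw [dotProduct_mulVec, ← mulVec_transpose, (hA.zpow k).eq]

theorem zpow_mulVec_zpow_mulVec (hA : IsUnit A.det) (j k : ℤ) (x : ι → ℝ) :
    A ^ j *ᵥ (A ^ k *ᵥ x) = A ^ (j + k) *ᵥ x := by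
  rw [mulVec_mulVec, zpow_add hA]

end Matrix

theorem stmt_0_general (n : ℕ) (w : Fin n → ℝ)
    (A : Matrix (Fin n) (Fin n) ℝ) (hA : A.PosDef) (α β : ℤ) :
    (w ⬝ᵥ (A ^ α).mulVec w) ^ 2 ≤
      (w ⬝ᵥ (A ^ (α + β)).mulVec w) * (w ⬝ᵥ (A ^ (α - β)).mulVec w) := by
  have hdet : IsUnit A.det := (isUnit_iff_isUnit_det A).mp hA.isUnit
  have hsymm : A.IsSymm := isHermitian_iff_isSymm.mp hA.isHermitian
  have hCS := (hA.posSemidef.zpow (α - β)).dotProduct_mulVec_sq_le w (A ^ β *ᵥ w)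
  have hcross : w ⬝ᵥ A ^ (α - β) *ᵥ (A ^ β *ᵥ w) = w ⬝ᵥ A ^ α *ᵥ w := by
    rw [zpow_mulVec_zpow_mulVec hdet, sub_add_cancel]
  have hdiag : (A ^ β *ᵥ w) ⬝ᵥ A ^ (α - β) *ᵥ (A ^ β *ᵥ w) = w ⬝ᵥ A ^ (α + β) *ᵥ w := by
    rw [hsymm.zpow_mulVec_dotProduct, zpow_mulVec_zpow_mulVec hdet,
      zpow_mulVec_zpow_mulVec hdet, show β + (α - β) + β = α + β by ring]
  rwa [hcross, hdiag, mul_comm] at hCS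

/-- Lemma 1: for a positive definite symmetric real matrix `A`, a vector `w ∈ ℝⁿ`,
and integers `α, β`, we have `(wᵀ Aᵅ w)² ≤ (wᵀ A^{α+β} w) (wᵀ A^{α-β} w)`. -/
theorem stmt_0 (n : ℕ) (hn : 0 < n) (w : Fin n → ℝ)
    (A : Matrix (Fin n) (Fin n) ℝ) (hA : A.PosDef) (α β : ℤ) :
    (w ⬝ᵥ (A ^ α).mulVec w) ^ 2 ≤
      (w ⬝ᵥ (A ^ (α + β)).mulVec w) * (w ⬝ᵥ (A ^ (α - β)).mulVec w) :=
  stmt_0_general n w A hA α β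
end

section
/- Let n be a positive integer, let H be an n×n positive definite symmetric real matrix, and let g be a nonzero vector in ℝ^n. Define v₁ = −g, v₂ = −H^{-1} g, v_∥ = ((v₂·v₁)/‖v₁‖²) v₁, and v_⊥ = v₂ − v_∥. Then the inner product v_⊥ · (2 H g) is nonnegative: v_⊥ · (2Hg) ≥ 0. -/
/-!
In the inner product `⟪x, y⟫_H = x ⬝ᵥ H *ᵥ y` one has `g ⬝ᵥ g = ⟪g, H⁻¹ g⟫_H`, so Cauchy–Schwarz
gives `(g ⬝ᵥ g)² ≤ (g ⬝ᵥ H g) (g ⬝ᵥ H⁻¹ g)`. Expanding `v⊥ ⬝ᵥ 2Hg` yields exactly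
`2 ((g ⬝ᵥ H⁻¹ g)(g ⬝ᵥ H g) / (g ⬝ᵥ g) - g ⬝ᵥ g)`, which is therefore nonnegative.
-/

open Matrix

namespace Matrix

variable {n R : Type*} [Fintype n]

theorem IsSymm.dotProduct_mulVec_comm [CommSemiring R] {M : Matrix n n R} (hM : M.IsSymm)
    (x y : n → R) : x ⬝ᵥ M *ᵥ y = y ⬝ᵥ M *ᵥ x := by
  rw [dotProduct_mulVec, ← mulVec_transpose, hM.eq, dotProduct_comm]

theorem PosSemidef.sq_dotProduct_mulVec_le [CommRing R] [LinearOrder R] [IsStrictOrderedRing R]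
    [StarRing R] [TrivialStar R] {M : Matrix n n R} (hM : M.PosSemidef) (x y : n → R) :
    (x ⬝ᵥ M *ᵥ y) ^ 2 ≤ (x ⬝ᵥ M *ᵥ x) * (y ⬝ᵥ M *ᵥ y) := by
  classical
  have hsymm : LinearMap.IsSymm M.toBilin' := LinearMap.BilinForm.isSymm_iff.1 <|
    isSymm_toBilin'_iff_isSymm.2 (isHermitian_iff_isSymm.1 hM.isHermitian)
  have hnonneg (z : n → R) : 0 ≤ M.toBilin' z z := by
    simpa [toBilin'_apply'] using hM.dotProduct_mulVec_nonneg z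
  simpa only [toBilin'_apply'] using M.toBilin'.apply_sq_le_of_symm hnonneg hsymm x y

variable [DecidableEq n]

theorem PosDef.mulVec_inv_mulVec [Field R] [PartialOrder R] [StarRing R] {H : Matrix n n R}
    (hH : H.PosDef) (x : n → R) : H *ᵥ H⁻¹ *ᵥ x = x := by
  rw [mulVec_mulVec, mul_nonsing_inv H ((isUnit_iff_isUnit_det H).1 hH.isUnit), one_mulVec]

theorem PosDef.sq_dotProduct_self_le_mul_inv [Field R] [LinearOrder R] [IsStrictOrderedRing R]
    [StarRing R] [TrivialStar R] {H : Matrix n n R} (hH : H.PosDef) (x : n → R) :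
    (x ⬝ᵥ x) ^ 2 ≤ (x ⬝ᵥ H *ᵥ x) * (x ⬝ᵥ H⁻¹ *ᵥ x) := by
  simpa only [hH.mulVec_inv_mulVec, dotProduct_comm (H⁻¹ *ᵥ x)] using
    hH.posSemidef.sq_dotProduct_mulVec_le x (H⁻¹ *ᵥ x)

end Matrix

theorem stmt_2_general (n : ℕ) (H : Matrix (Fin n) (Fin n) ℝ) (hH : H.PosDef)
    (g : Fin n → ℝ)
    (v₁ v₂ vpar vperp : Fin n → ℝ)
    (hv₁ : v₁ = -g)
    (hv₂ : v₂ = -(H⁻¹.mulVec g))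
    (hpar : vpar = ((v₂ ⬝ᵥ v₁) / (v₁ ⬝ᵥ v₁)) • v₁)
    (hperp : vperp = v₂ - vpar) :
    0 ≤ vperp ⬝ᵥ ((2 : ℝ) • H.mulVec g) := by
  subst hv₁ hv₂ hpar hperp
  set a := g ⬝ᵥ g
  set b := g ⬝ᵥ H *ᵥ g
  set c := g ⬝ᵥ H⁻¹ *ᵥ g
  have hcross : H⁻¹ *ᵥ g ⬝ᵥ H *ᵥ g = a := by
    rw [(isHermitian_iff_isSymm.1 hH.isHermitian).dotProduct_mulVec_comm, hH.mulVec_inv_mulVec]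
  have hexpand : (-(H⁻¹ *ᵥ g) - ((-(H⁻¹ *ᵥ g) ⬝ᵥ -g) / (-g ⬝ᵥ -g)) • -g) ⬝ᵥ (2 : ℝ) • H *ᵥ g
      = 2 * (c * b / a - a) := by
    simp only [sub_dotProduct, dotProduct_smul, smul_dotProduct, neg_dotProduct, dotProduct_neg,
      neg_neg, hcross, dotProduct_comm (H⁻¹ *ᵥ g) g, smul_eq_mul]
    ring
  have hcs : a ^ 2 ≤ b * c := hH.sq_dotProduct_self_le_mul_inv g
  have ha : a ≤ c * b / a := by
    rcases (by simpa using dotProduct_self_star_nonneg g : 0 ≤ a).eq_or_lt with ha0 | hapos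
    · simp [← ha0]
    · rw [le_div_iff₀ hapos]; nlinarith
  rw [hexpand]
  linarith

/-- Proposition 1: for positive definite symmetric `H` and nonzero `g`, with
`v₁ = −g` (gradient descent direction), `v₂ = −H⁻¹ g` (Newton direction),
`v∥ = ((v₂·v₁)/‖v₁‖²) v₁` the projection of `v₂` on `v₁`, and `v⊥ = v₂ − v∥`,
the inner product `v⊥ · (2Hg)` is nonnegative. -/
theorem stmt_2 (n : ℕ) (hn : 0 < n) (H : Matrix (Fin n) (Fin n) ℝ) (hH : H.PosDef)
    (g : Fin n → ℝ) (hg : g ≠ 0)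
    (v₁ v₂ vpar vperp : Fin n → ℝ)
    (hv₁ : v₁ = -g)
    (hv₂ : v₂ = -(H⁻¹.mulVec g))
    (hpar : vpar = ((v₂ ⬝ᵥ v₁) / (v₁ ⬝ᵥ v₁)) • v₁)
    (hperp : vperp = v₂ - vpar) :
    0 ≤ vperp ⬝ᵥ ((2 : ℝ) • H.mulVec g) :=
  stmt_2_general n H hH g v₁ v₂ vpar vperp hv₁ hv₂ hpar hperp
end
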